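/- Let (a_n) = (b_n)||(c_n), where b_n ≡ 0 and (c'_n) = (c_n) is a sequence of positive reals with c_n < n for all n and c_n → +∞. Then 1 ∈ AAR_{(a_n)}, i.e. 1 is accessible in average by rearrangement of (a_n). -/

import Mathlib

open Filter Topology

/-- Arithmetic mean of the first `n` terms of a real sequence. -/
noncomputable def avgSeq (a : ℕ → ℝ) (n : ℕ) : ℝ := (∑ i ∈ Finset.range n, a i) / n

/-- `a` tends to `α ∈ ℝ̄` in average: the sequence of arithmetic means tends to `α`. -/
def avgTendsTo (a : ℕ → ℝ) (α : EReal) : Prop :=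
  Tendsto (fun n => ((avgSeq a n : ℝ) : EReal)) atTop (𝓝 α)

/-- The set of points of `ℝ̄` accessible in average by rearrangement of `a`. -/
def AAR (a : ℕ → ℝ) : Set EReal :=
  {α | ∃ p : ℕ → ℕ, Function.Bijective p ∧ avgTendsTo (fun n => a (p n)) α}

/-- The interleaving `(b_n)||(c_n)` (0-indexed: `a (2n) = b n`, `a (2n+1) = c n`). -/
noncomputable def interleave (b c : ℕ → ℝ) : ℕ → ℝ :=
  fun n => if n % 2 = 0 then b (n / 2) else c (n / 2)

/-!
Place the terms of `c` at the positions `blockStart c k = ⌈c 0⌉₊ + ⋯ + ⌈c (k-1)⌉₊` and fill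
the remaining positions with the zeros, so that the rearrangement consists of blocks
`c k, 0, …, 0` of length `⌈c k⌉₊`. If the first `N` terms end in block `k`, their sum is
`c 0 + ⋯ + c k`, which differs from `N` by at most `k + 1` (the bound `c k < k + 1` controls the
overshoot at the head of a block). Since `c → ∞`, `k = o(c 0 + ⋯ + c k)`, so the means tend to `1`.
-/

open Function Set Asymptotics

theorem interleave_two_mul_add_one (b c : ℕ → ℝ) (k : ℕ) : interleave b c (2 * k + 1) = c k := by
  simp [interleave, Nat.mul_add_div]

theorem interleave_of_even (b c : ℕ → ℝ) {i : ℕ} (hi : Even i) : interleave b c i = b (i / 2) := by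
  simp [interleave, Nat.even_iff.mp hi]

theorem exists_equiv_odd_on_range {M : ℕ → ℕ} (hM : Injective M) (hinf : (range M)ᶜ.Infinite) :
    ∃ e : ℕ ≃ ℕ, (∀ k, e (M k) = 2 * k + 1) ∧ ∀ i ∉ range M, Even (e i) := by
  classical
  have := hinf.to_subtype
  let e : ℕ ≃ ℕ := (Equiv.sumCompl (· ∈ range M)).symm.trans <| (Equiv.sumComm _ _).trans <|
    (Equiv.sumCongr (Nat.Subtype.orderIsoOfNat (range M)ᶜ).symm.toEquiv
      (Equiv.ofInjective M hM).symm).trans Equiv.natSumNatEquivNat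
  refine ⟨e, fun k => ?_, fun i hi => ?_⟩
  · simp [e, Equiv.sumCompl_symm_apply_of_pos (p := (· ∈ range M)) (mem_range_self k),
      Equiv.natSumNatEquivNat_apply]
  · simp [e, Equiv.sumCompl_symm_apply_of_neg (p := (· ∈ range M)) hi,
      Equiv.natSumNatEquivNat_apply]

theorem sum_range_interleave_zero_comp {M : ℕ → ℕ} (hM : Injective M) {p : ℕ → ℕ}
    (hp_odd : ∀ k, p (M k) = 2 * k + 1) (hp_even : ∀ i ∉ range M, Even (p i)) (c : ℕ → ℝ) (N : ℕ) :
    ∑ i ∈ Finset.range N, interleave (fun _ => 0) c (p i) =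
      ∑ k ∈ (Finset.range N).preimage M hM.injOn, c k := by
  rw [← Finset.sum_preimage M _ hM.injOn _ fun i _ hi => interleave_of_even _ _ (hp_even i hi)]
  simp only [hp_odd, interleave_two_mul_add_one]

theorem StrictMono.preimage_range_eq_range {M : ℕ → ℕ} (hM : StrictMono M) {k N : ℕ}
    (hlo : M k < N) (hhi : N ≤ M (k + 1)) :
    (Finset.range N).preimage M hM.injective.injOn = Finset.range (k + 1) := by
  ext j
  simp only [Finset.mem_preimage, Finset.mem_range]
  constructor
  · intro hj
    by_contra! h
    exact absurd (hhi.trans (hM.monotone h)) hj.not_ge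
  · intro hj
    exact (hM.monotone (Nat.le_of_lt_succ hj)).trans_lt hlo

theorem isLittleO_natCast_sum_range {c : ℕ → ℝ} (hc₀ : ∀ n, 0 ≤ c n)
    (hc : Tendsto c atTop atTop) :
    (fun n : ℕ => (n : ℝ)) =o[atTop] fun n => ∑ i ∈ Finset.range n, c i := by
  have hone : (fun _ : ℕ => (1 : ℝ)) =o[atTop] c :=
    (isLittleO_one_left_iff ℝ).2 (tendsto_norm_atTop_atTop.comp hc)
  have hsum : Tendsto (fun n => ∑ i ∈ Finset.range n, c i) atTop atTop :=
    (not_summable_iff_tendsto_nat_atTop_of_nonneg hc₀).1 fun hs =>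
      not_tendsto_nhds_of_tendsto_atTop hc 0 hs.tendsto_atTop_zero
  simpa using hone.sum_range hc₀ hsum

theorem Asymptotics.IsLittleO.isEquivalent_comp_of_abs_sub_le {α : Type*} {l : Filter α}
    {C : ℕ → ℝ} (hC : (fun n : ℕ => (n : ℝ)) =o[atTop] C) {n : α → ℕ} (hn : Tendsto n l atTop)
    {x : α → ℝ} (hx : ∀ a, |C (n a) - x a| ≤ n a) :
    (fun a => C (n a)) ~[l] x := by
  refine IsEquivalent.symm ?_
  refine IsBigO.trans_isLittleO (g := fun a => (n a : ℝ)) ?_ (hC.comp_tendsto hn)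
  exact IsBigO.of_bound' (Eventually.of_forall fun a => by simpa [abs_sub_comm] using hx a)

noncomputable def blockStart (c : ℕ → ℝ) (k : ℕ) : ℕ := ∑ j ∈ Finset.range k, ⌈c j⌉₊

section blockStart

variable {c : ℕ → ℝ}

theorem blockStart_succ (k : ℕ) : blockStart c (k + 1) = blockStart c k + ⌈c k⌉₊ :=
  Finset.sum_range_succ _ k

theorem blockStart_strictMono (hpos : ∀ n, 0 < c n) : StrictMono (blockStart c) :=
  strictMono_nat_of_lt_succ fun k => by
    simpa [blockStart_succ] using hpos k

theorem infinite_compl_range_blockStart (hpos : ∀ n, 0 < c n) (htop : Tendsto c atTop atTop) :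
    (range (blockStart c))ᶜ.Infinite := by
  have hM := blockStart_strictMono hpos
  obtain ⟨j₀, hj₀⟩ := (htop.eventually_gt_atTop 1).exists_forall_of_atTop
  refine Set.infinite_of_forall_exists_gt fun a => ⟨blockStart c (max a j₀) + 1, ?_, ?_⟩
  · rintro ⟨m, hm⟩
    have hgap : 1 < ⌈c (max a j₀)⌉₊ := Nat.lt_ceil.2 (by exact_mod_cast hj₀ _ (le_max_right _ _))
    have h₁ : max a j₀ < m := hM.lt_iff_lt.1 (by omega)
    have h₂ : m < max a j₀ + 1 := hM.lt_iff_lt.1 (by rw [blockStart_succ]; omega)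
    omega
  · have := hM.le_apply (x := max a j₀)
    omega

theorem sum_range_le_blockStart (k : ℕ) : ∑ j ∈ Finset.range k, c j ≤ blockStart c k := by
  rw [blockStart, Nat.cast_sum]
  exact Finset.sum_le_sum fun j _ => Nat.le_ceil _

theorem blockStart_le_sum_range_add (hc₀ : ∀ n, 0 ≤ c n) (k : ℕ) :
    (blockStart c k : ℝ) ≤ ∑ j ∈ Finset.range k, c j + k := by
  rw [blockStart, Nat.cast_sum]
  calc ∑ j ∈ Finset.range k, (⌈c j⌉₊ : ℝ) ≤ ∑ j ∈ Finset.range k, (c j + 1) :=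
        Finset.sum_le_sum fun j _ => (Nat.ceil_lt_add_one (hc₀ j)).le
    _ = ∑ j ∈ Finset.range k, c j + k := by simp [Finset.sum_add_distrib]

theorem abs_sum_range_succ_sub_le (hc₀ : ∀ n, 0 ≤ c n) (hlt : ∀ n, c n < (n : ℝ) + 1) {k N : ℕ}
    (hlo : blockStart c k < N) (hhi : N ≤ blockStart c (k + 1)) :
    |∑ j ∈ Finset.range (k + 1), c j - N| ≤ (k + 1 : ℕ) := by
  have hlo' : (blockStart c k : ℝ) + 1 ≤ N := by exact_mod_cast hlo
  have hhi' : (N : ℝ) ≤ blockStart c (k + 1) := by exact_mod_cast hhi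
  have hC_le := sum_range_le_blockStart (c := c) k
  have hle_C := blockStart_le_sum_range_add hc₀ (k + 1)
  rw [Finset.sum_range_succ] at hle_C ⊢
  rw [abs_le]
  push_cast at hle_C ⊢
  constructor <;> linarith [hlt k]

end blockStart

/-- For `(a_n) = (0)||(c_n)` with `0 < c_n`, `c_n` less than its (1-based) index,
and `c_n → +∞`, the point `1` is accessible in average by rearrangement. -/
theorem stmt14 (c : ℕ → ℝ) (hpos : ∀ n, 0 < c n)
    (hlt : ∀ n, c n < (n : ℝ) + 1) (htop : Tendsto c atTop atTop) :
    (1 : EReal) ∈ AAR (interleave (fun _ => 0) c) := by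
  have hc₀ : ∀ n, 0 ≤ c n := fun n => (hpos n).le
  have hM := blockStart_strictMono hpos
  obtain ⟨e, he_odd, he_even⟩ :=
    exists_equiv_odd_on_range hM.injective (infinite_compl_range_blockStart hpos htop)
  refine ⟨e, e.bijective, ?_⟩
  choose k hk_lo hk_hi using fun N : ℕ =>
    hM.exists_between_of_tendsto_atTop hM.tendsto_atTop (x := N + 1) (by simp [blockStart])
  have hk_top : Tendsto (fun N => k N + 1) atTop atTop := by
    refine tendsto_atTop_atTop.2 fun K => ⟨blockStart c K, fun N hN => ?_⟩
    by_contra! h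
    exact absurd ((hk_hi N).trans (hM.monotone h.le)) (by omega)
  have hsum : ∀ N, ∑ i ∈ Finset.range (N + 1), interleave (fun _ => 0) c (e i) =
      ∑ j ∈ Finset.range (k N + 1), c j := fun N => by
    rw [sum_range_interleave_zero_comp hM.injective he_odd he_even,
      hM.preimage_range_eq_range (hk_lo N) (hk_hi N)]
  have hequiv : (fun N => ∑ j ∈ Finset.range (k N + 1), c j) ~[atTop]
      fun N : ℕ => ((N + 1 : ℕ) : ℝ) :=
    (isLittleO_natCast_sum_range hc₀ htop).isEquivalent_comp_of_abs_sub_le hk_top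
      fun N => abs_sum_range_succ_sub_le hc₀ hlt (hk_lo N) (hk_hi N)
  have hlim := (isEquivalent_iff_tendsto_one (Eventually.of_forall fun N => by positivity)).1 hequiv
  rw [avgTendsTo, ← EReal.coe_one, EReal.tendsto_coe, ← tendsto_add_atTop_iff_nat 1]
  simpa [avgSeq, hsum, Pi.div_def] using hlim
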